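/- arXiv:1808.10385 — 2 statements merged into one kernel-verified Lean document; each statement's English description precedes it below -/
import Mathlib

section
/- (The basic Jellium example satisfies the Jellium condition but violates the Wiener condition.) Let N ≥ 2 and let σ₁ be the N·ℤ³-periodic function with σ₁(x) = eZ for x ∈ [−1/2,1/2)³ and σ₁(x) = 0 for x ∈ [−N/2,N/2)³ \ [−1/2,1/2)³, where e, Z > 0. Then: (i) σ̂₁(ξ) = eZ·∏_{j=1}^{3} (2 sin(ξⱼ/2)/ξⱼ) for every ξ ∈ Γ*_N with all coordinates nonzero (each factor replaced by 1 when ξⱼ = 0); in particular σ̂₁(ξ) = 0 for all ξ ∈ Γ*_1 \ {0}, so the Jellium condition holds; (ii) for every θ = (0,θ₂,θ₃) ∈ Γ*_N \ Γ*_1, the (1,1) entry of Σ(θ) is 0, hence Σ(θ) is not positive definite and the Wiener condition fails. -/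
/-! The cell is a product of one-dimensional windows, so `σ̂₁` factorises over the coordinates. In
each coordinate, `t ↦ e^{iξt}` with `ξ ∈ Γ*_N` is `N`-periodic, which moves the part of the window
near `N` next to `0` and leaves `∫_{-1/2}^{1/2} e^{iξt} dt = sinc (ξ/2)`. This vanishes at
`ξ ∈ 2πℤ \ {0}`, giving the Jellium condition. If `θ₁ = 0`, every `ξ = θ + 2πm` has `ξ₁ = 0` or
`ξ₁ ∈ 2πℤ \ {0}`, so every term of `Σ(θ)₁₁` vanishes, and a positive definite matrix has no zero
diagonal entry. -/

noncomputable section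

namespace SPN

open MeasureTheory Finset
open scoped Real

/-- Points of `ℝ³`. -/
abbrev V3 : Type := Fin 3 → ℝ

/-- Euclidean dot product on `ℝ³`. -/
def dotP (v w : V3) : ℝ := ∑ i, v i * w i

/-- Squared Euclidean norm on `ℝ³`. -/
def nsqV (v : V3) : ℝ := ∑ i, v i ^ 2

/-- The fundamental cube `[0,N)³` of the torus `T_N = ℝ³/(N·ℤ³)`. -/
def cubeN (N : ℕ) : Set V3 := {x | ∀ i, x i ∈ Set.Ico (0 : ℝ) (N : ℝ)}

/-- `N·ℤ³`-periodicity of a function on `ℝ³`. -/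
def IsPerN {α : Type*} (N : ℕ) (f : V3 → α) : Prop :=
  ∀ (x : V3) (k : Fin 3 → ℤ), f (x + fun i => (N : ℝ) * (k i : ℝ)) = f x

/-- Index set for `Γ_N = {0,…,N−1}³`. -/
abbrev GammaIdx (N : ℕ) : Type := Fin 3 → Fin N

/-- The lattice point of `Γ_N` associated to an index. -/
def embG {N : ℕ} (n : GammaIdx N) : V3 := fun i => ((n i : ℕ) : ℝ)

/-- Fourier coefficient `f̂(ξ) = ∫_{T_N} e^{iξ·x} f(x) dx`. -/
def fCoeff (N : ℕ) (f : V3 → ℂ) (ξ : V3) : ℂ :=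
  ∫ x in cubeN N, Complex.exp (Complex.I * ((dotP ξ x : ℝ) : ℂ)) * f x

/-- Fourier coefficient of a real-valued function. -/
def fCoeffR (N : ℕ) (f : V3 → ℝ) (ξ : V3) : ℂ :=
  fCoeff N (fun x => ((f x : ℝ) : ℂ)) ξ

/-- The point `(2π/N)·k` of the dual lattice `Γ*_N`. -/
def xiN (N : ℕ) (k : Fin 3 → ℤ) : V3 := fun i => (2 * π / (N : ℝ)) * (k i : ℝ)

/-- The Jellium condition: `σ̂(ξ) = 0` for all `ξ ∈ Γ*_1 \ {0}`. -/
def JelliumCond (N : ℕ) (σ : V3 → ℝ) : Prop :=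
  ∀ k : Fin 3 → ℤ, k ≠ 0 → fCoeffR N σ (fun i => 2 * π * (k i : ℝ)) = 0

/-- `(2π/N)·k ∈ Γ*_1`, i.e. every coordinate of `k` is divisible by `N`. -/
def inGamma1 (N : ℕ) (k : Fin 3 → ℤ) : Prop := ∀ i, (N : ℤ) ∣ k i

/-- `|∇φ(x)|²` for a complex-valued function. -/
def gradSq (φ : V3 → ℂ) (x : V3) : ℝ :=
  ∑ i, Complex.normSq (fderiv ℝ φ x (Pi.single i 1))

/-- Gradient of a real-valued function on `ℝ³`. -/
def gradV (f : V3 → ℝ) (x : V3) : V3 := fun i => fderiv ℝ f x (Pi.single i 1)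

/-- Total charge density `ρ(x) = ∑_n σ(x−n−q(n)) − e|ψ(x)|²`. -/
def rhoT (N : ℕ) (σ : V3 → ℝ) (e : ℝ) (ψ : V3 → ℂ) (q : GammaIdx N → V3) (x : V3) : ℝ :=
  (∑ n : GammaIdx N, σ (x - embG n - q n)) - e * Complex.normSq (ψ x)

/-- `∑_{ξ∈Γ*_N\{0}} |f̂(ξ)|²/|ξ|²`. -/
def dualSum (N : ℕ) (f : V3 → ℝ) : ℝ :=
  ∑' k : Fin 3 → ℤ, if k = 0 then 0 else
    Complex.normSq (fCoeffR N f (xiN N k)) / nsqV (xiN N k)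

/-- The energy functional `E(ψ,q,p)`. -/
def energyE (N : ℕ) (σ : V3 → ℝ) (e M : ℝ) (ψ : V3 → ℂ) (q p : GammaIdx N → V3) : ℝ :=
  (1 / 2) * (∫ x in cubeN N, gradSq ψ x)
    + (2 * (N : ℝ) ^ 3)⁻¹ * dualSum N (rhoT N σ e ψ q)
    + (2 * M)⁻¹ * ∑ n : GammaIdx N, nsqV (p n)

/-- The matrix `Σ(θ) = ∑_{m∈ℤ³} (ξξᵀ/|ξ|²)|σ̂(ξ)|²`, `ξ = θ + 2πm`. -/
def SigMat (N : ℕ) (σ : V3 → ℝ) (θ : V3) : Matrix (Fin 3) (Fin 3) ℝ :=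
  Matrix.of fun a b => ∑' m : Fin 3 → ℤ,
    ((θ a + 2 * π * (m a : ℝ)) * (θ b + 2 * π * (m b : ℝ))
        / nsqV (fun i => θ i + 2 * π * (m i : ℝ)))
      * Complex.normSq (fCoeffR N σ (fun i => θ i + 2 * π * (m i : ℝ)))

/-- The Wiener condition: `Σ(θ)` is positive definite for all `θ ∈ Γ*_N \ Γ*_1`. -/
def WienerCond (N : ℕ) (σ : V3 → ℝ) : Prop :=
  ∀ k : Fin 3 → ℤ, ¬ inGamma1 N k → (SigMat N σ (xiN N k)).PosDef

/-- First-order ionic density `σ⁽¹⁾(x) = −∑_n κ(n)·∇σ(x−n−r)`. -/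
def sigma1F (N : ℕ) (σ : V3 → ℝ) (r : V3) (κ : GammaIdx N → V3) (x : V3) : ℝ :=
  - ∑ n : GammaIdx N, dotP (κ n) (gradV σ (x - embG n - r))

/-- First-order charge density `ρ⁽¹⁾(x) = σ⁽¹⁾(x) − 2e√Z·Re(e^{−iα}φ(x))`. -/
def rho1F (N : ℕ) (σ : V3 → ℝ) (e Z α : ℝ) (r : V3) (κ : GammaIdx N → V3)
    (φ : V3 → ℂ) (x : V3) : ℝ :=
  sigma1F N σ r κ x - 2 * e * Real.sqrt Z * (Complex.exp (-Complex.I * (α : ℂ)) * φ x).re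

/-- The quadratic form `B(φ,κ,p)` (half of the energy Hessian). -/
def BformQ (N : ℕ) (σ : V3 → ℝ) (e Z M α : ℝ) (r : V3)
    (φ : V3 → ℂ) (κ p : GammaIdx N → V3) : ℝ :=
  (1 / 2) * (∫ x in cubeN N, gradSq φ x)
    + (2 * (N : ℝ) ^ 3)⁻¹ * dualSum N (rho1F N σ e Z α r κ φ)
    + (2 * M)⁻¹ * ∑ n : GammaIdx N, nsqV (p n)

/-- Second-order charge density `ρ⁽²⁾`. -/
def rho2F (N : ℕ) (σ : V3 → ℝ) (e : ℝ) (r : V3) (κ : GammaIdx N → V3)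
    (φ : V3 → ℂ) (x : V3) : ℝ :=
  (∑ n : GammaIdx N,
      (σ (x - embG n - r - κ n) - σ (x - embG n - r)
        + dotP (κ n) (gradV σ (x - embG n - r))))
    - e * Complex.normSq (φ x)

/-- The pairing `(f, Gg) = N⁻³ ∑_{ξ∈Γ*_N\{0}} Re(f̂(ξ)·conj(ĝ(ξ)))/|ξ|²`. -/
def GPair (N : ℕ) (f g : V3 → ℝ) : ℝ :=
  ((N : ℝ) ^ 3)⁻¹ * ∑' k : Fin 3 → ℤ, if k = 0 then 0 else
    (fCoeffR N f (xiN N k) * (starRingEnd ℂ) (fCoeffR N g (xiN N k))).re / nsqV (xiN N k)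

/-- The distance to the solitary manifold of ground states. -/
def distS (N : ℕ) (Z : ℝ) (ψ : V3 → ℂ) (q p : GammaIdx N → V3) : ℝ :=
  ⨅ (α : ℝ) (r : V3),
    (Real.sqrt (∫ x in cubeN N,
        (Complex.normSq (ψ x - Complex.exp (Complex.I * (α : ℂ)) * ((Real.sqrt Z : ℝ) : ℂ))
          + gradSq ψ x))
      + Real.sqrt (∑ n : GammaIdx N, ⨅ k : Fin 3 → ℤ,
          nsqV (fun i => q n i - r i - (N : ℝ) * (k i : ℝ)))
      + Real.sqrt (∑ n : GammaIdx N, nsqV (p n)))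

/-- The discrete Fourier transform `κ̂(θ) ∈ ℂ³` of `κ : Γ_N → ℝ³`. -/
def hatK (N : ℕ) (κ : GammaIdx N → V3) (θ : V3) (a : Fin 3) : ℂ :=
  ∑ n : GammaIdx N, Complex.exp (Complex.I * ((dotP θ (embG n) : ℝ) : ℂ)) * ((κ n a : ℝ) : ℂ)

/-- Laplacian of a complex-valued function on `ℝ³`. -/
def lapC (f : V3 → ℂ) (x : V3) : ℂ :=
  ∑ i, fderiv ℝ (fun y => fderiv ℝ f y (Pi.single i 1)) x (Pi.single i 1)

/-- Laplacian of a real-valued function on `ℝ³`. -/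
def lapR (f : V3 → ℝ) (x : V3) : ℝ :=
  ∑ i, fderiv ℝ (fun y => fderiv ℝ f y (Pi.single i 1)) x (Pi.single i 1)

/-- A classical solution of the Schrödinger–Poisson–Newton system on `ℝ`. -/
structure IsSPN (N : ℕ) (σ : V3 → ℝ) (e M : ℝ)
    (ψ : V3 → ℝ → ℂ) (Φ : V3 → ℝ → ℝ) (q : ℝ → GammaIdx N → V3) : Prop where
  per_psi : ∀ t : ℝ, IsPerN N (fun x => ψ x t)
  per_Phi : ∀ t : ℝ, IsPerN N (fun x => Φ x t)
  regx_psi : ∀ t : ℝ, ContDiff ℝ 2 (fun x => ψ x t)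
  regt_psi : ∀ x : V3, ContDiff ℝ 1 (fun t => ψ x t)
  regx_Phi : ∀ t : ℝ, ContDiff ℝ 2 (fun x => Φ x t)
  regt_Phi : ∀ x : V3, ContDiff ℝ 1 (fun t => Φ x t)
  reg_q : ContDiff ℝ 2 q
  schrodinger : ∀ (x : V3) (t : ℝ),
    Complex.I * deriv (fun s => ψ x s) t =
      -(1 / 2 : ℂ) * lapC (fun y => ψ y t) x - ((e : ℝ) : ℂ) * ((Φ x t : ℝ) : ℂ) * ψ x t
  poisson : ∀ (x : V3) (t : ℝ),
    - lapR (fun y => Φ y t) x =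
      (∑ n : GammaIdx N, σ (x - embG n - q t n)) - e * Complex.normSq (ψ x t)
  newton : ∀ (n : GammaIdx N) (t : ℝ) (i : Fin 3),
    M * deriv (fun s => deriv (fun u => q u n i) s) t =
      - ∫ x in cubeN N, fderiv ℝ (fun y => Φ y t) x (Pi.single i 1) * σ (x - embG n - q t n)

/-- The basic Jellium density: `eZ` on the unit cell `[−1/2,1/2)³ mod N·ℤ³`, zero elsewhere. -/
def jelliumCell (N : ℕ) (e Z : ℝ) : V3 → ℝ :=
  Set.indicator
    {x : V3 | ∀ i, ∃ k : ℤ, x i - (N : ℝ) * (k : ℝ) ∈ Set.Ico (-(1 / 2) : ℝ) (1 / 2)}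
    (fun _ => e * Z)

def unitCellMod (N : ℕ) : Set ℝ := {t | ∃ k : ℤ, t - N * k ∈ Set.Ico (-(1 / 2)) (1 / 2)}

lemma measurableSet_unitCellMod (N : ℕ) : MeasurableSet (unitCellMod N) := by
  have : unitCellMod N = ⋃ k : ℤ, (· - (N : ℝ) * k) ⁻¹' Set.Ico (-(1 / 2)) (1 / 2) := by
    ext t
    simp only [unitCellMod, Set.mem_iUnion, Set.mem_preimage, Set.mem_ofPred_eq]
  rw [this]
  exact MeasurableSet.iUnion fun k => measurableSet_Ico.preimage (measurable_sub_const _)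

lemma Ico_inter_unitCellMod {N : ℕ} (hN : 0 < N) :
    Set.Ico 0 (N : ℝ) ∩ unitCellMod N = Set.Ico (0 : ℝ) (1 / 2) ∪ Set.Ico ((N : ℝ) - 1 / 2) N := by
  have hN1 : (1 : ℝ) ≤ N := by exact_mod_cast hN
  ext t
  simp only [unitCellMod, Set.mem_inter_iff, Set.mem_union, Set.mem_Ico, Set.mem_ofPred_eq]
  constructor
  · rintro ⟨⟨ht0, htN⟩, m, hm0, hm1⟩
    rcases le_or_gt m 0 with hm | hm
    · have : (N : ℝ) * m ≤ 0 :=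
        mul_nonpos_of_nonneg_of_nonpos (by positivity) (by exact_mod_cast hm)
      exact Or.inl ⟨ht0, by linarith⟩
    · have : (N : ℝ) ≤ N * m := le_mul_of_one_le_right (by positivity) (by exact_mod_cast hm)
      exact Or.inr ⟨by linarith, htN⟩
  · rintro (⟨ht0, ht1⟩ | ⟨ht0, ht1⟩)
    · refine ⟨⟨ht0, by linarith⟩, 0, ?_⟩
      simp only [Int.cast_zero, mul_zero, sub_zero]
      exact ⟨by linarith, ht1⟩
    · refine ⟨⟨by linarith, ht1⟩, 1, ?_⟩
      simp only [Int.cast_one, mul_one]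
      constructor <;> linarith

lemma jelliumCell_eq_indicator_pi (N : ℕ) (e Z : ℝ) :
    jelliumCell N e Z = (Set.univ.pi fun _ => unitCellMod N).indicator fun _ => e * Z := by
  unfold jelliumCell
  congr 1
  ext x
  simp [unitCellMod]

lemma cubeN_eq_pi (N : ℕ) : cubeN N = Set.univ.pi fun _ => Set.Ico (0 : ℝ) N := by
  ext x
  simp [cubeN]

theorem setIntegral_univ_pi_prod {𝕜 ι : Type*} [RCLike 𝕜] [Fintype ι] {E : ι → Type*}
    [∀ i, MeasureSpace (E i)] [∀ i, SigmaFinite (volume : Measure (E i))]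
    (s : ∀ i, Set (E i)) (f : ∀ i, E i → 𝕜) :
    ∫ x in Set.univ.pi s, ∏ i, f i (x i) = ∏ i, ∫ t in s i, f i t := by
  rw [volume_pi, Measure.restrict_pi_pi, integral_fintype_prod_eq_prod]

lemma integral_Ico_inter_unitCellMod {E : Type*} [NormedAddCommGroup E] [NormedSpace ℝ E]
    {N : ℕ} (hN : 0 < N) {f : ℝ → E} (hf : Function.Periodic f N) (hcont : Continuous f) :
    ∫ t in Set.Ico 0 (N : ℝ) ∩ unitCellMod N, f t = ∫ t in (-(1 / 2) : ℝ)..(1 / 2), f t := by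
  have hN1 : (1 : ℝ) ≤ N := by exact_mod_cast hN
  have hdisj : Disjoint (Set.Ico (0 : ℝ) (1 / 2)) (Set.Ico ((N : ℝ) - 1 / 2) N) :=
    Set.disjoint_left.mpr fun t ht ht' => by linarith [ht.2, ht'.1]
  have hint (a b : ℝ) : IntegrableOn f (Set.Ico a b) :=
    (hcont.integrableOn_Icc (a := a) (b := b)).mono_set Set.Ico_subset_Icc_self
  have hshift : ∫ t in (N - 1 / 2 : ℝ)..N, f t = ∫ t in (-(1 / 2) : ℝ)..0, f t := by
    have := intervalIntegral.integral_comp_add_right f (N : ℝ) (a := -(1 / 2)) (b := 0)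
    simp only [show ∀ x, f (x + N) = f x from hf] at this
    rw [this]
    congr 1 <;> ring
  rw [Ico_inter_unitCellMod hN, setIntegral_union hdisj measurableSet_Ico (hint _ _) (hint _ _),
    integral_Ico_eq_integral_Ioc, integral_Ico_eq_integral_Ioc,
    ← intervalIntegral.integral_of_le (by norm_num),
    ← intervalIntegral.integral_of_le (by linarith),
    hshift, add_comm, intervalIntegral.integral_add_adjacent_intervals]
  all_goals exact hcont.intervalIntegrable _ _

lemma periodic_cexp_I_mul {c T : ℝ} {k : ℤ} (h : c * T = 2 * π * k) :
    Function.Periodic (fun t : ℝ => Complex.exp (Complex.I * ((c * t : ℝ) : ℂ))) T := by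
  intro t
  have : Complex.I * ((c * (t + T) : ℝ) : ℂ) =
      Complex.I * ((c * t : ℝ) : ℂ) + k * (2 * π * Complex.I) := by
    rw [mul_add, Complex.ofReal_add, h]
    push_cast
    ring
  simp only [this, Complex.exp_add, Complex.exp_int_mul_two_pi_mul_I, mul_one]

lemma integral_cexp_I_mul_neg_half_half (c : ℝ) :
    ∫ t in (-(1 / 2) : ℝ)..(1 / 2), Complex.exp (Complex.I * ((c * t : ℝ) : ℂ)) =
      (Real.sinc (c / 2) : ℂ) := by
  rcases eq_or_ne c 0 with rfl | hc
  · norm_num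
  have hIc : Complex.I * c ≠ 0 := mul_ne_zero Complex.I_ne_zero (by exact_mod_cast hc)
  simp_rw [Complex.ofReal_mul, ← mul_assoc]
  rw [integral_exp_mul_complex hIc, Real.sinc_of_ne_zero (by simpa using hc)]
  have hhalf (s : ℝ) : Complex.I * c * ((s / 2 : ℝ) : ℂ) = (s * (c / 2) : ℂ) * Complex.I := by
    push_cast; ring
  rw [show (-(1 / 2) : ℝ) = -1 / 2 by ring, hhalf, hhalf,
    Complex.exp_mul_I, Complex.exp_mul_I]
  simp only [Complex.ofReal_one, Complex.ofReal_neg, one_mul, neg_one_mul, Complex.cos_neg,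
    Complex.sin_neg]
  push_cast
  field_simp
  ring

lemma xiN_mul_natCast {N : ℕ} (hN : N ≠ 0) (k : Fin 3 → ℤ) (j : Fin 3) :
    xiN N k j * N = 2 * π * k j := by
  simp only [xiN]
  field_simp

lemma fCoeffR_jelliumCell {N : ℕ} (hN : 0 < N) (e Z : ℝ) (k : Fin 3 → ℤ) :
    fCoeffR N (jelliumCell N e Z) (xiN N k) =
      ((e * Z : ℝ) : ℂ) * ∏ j, (Real.sinc (xiN N k j / 2) : ℂ) := by
  have hcell : MeasurableSet (Set.univ.pi fun _ : Fin 3 => unitCellMod N) :=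
    MeasurableSet.univ_pi fun _ => measurableSet_unitCellMod N
  have hexp (x : V3) : Complex.exp (Complex.I * ((dotP (xiN N k) x : ℝ) : ℂ)) =
      ∏ j, Complex.exp (Complex.I * ((xiN N k j * x j : ℝ) : ℂ)) := by
    simp only [dotP, Complex.ofReal_sum, Finset.mul_sum, Complex.exp_sum]
  calc fCoeffR N (jelliumCell N e Z) (xiN N k)
      = ∫ x in cubeN N, (Set.univ.pi fun _ => unitCellMod N).indicator (fun x =>
          ((e * Z : ℝ) : ℂ) * Complex.exp (Complex.I * ((dotP (xiN N k) x : ℝ) : ℂ))) x := by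
        rw [fCoeffR, fCoeff, jelliumCell_eq_indicator_pi]
        congr 1
        ext x
        by_cases hx : x ∈ Set.univ.pi fun _ => unitCellMod N <;> simp [hx, mul_comm]
    _ = ((e * Z : ℝ) : ℂ) * ∫ x in Set.univ.pi fun _ => Set.Ico 0 (N : ℝ) ∩ unitCellMod N,
          ∏ j, Complex.exp (Complex.I * ((xiN N k j * x j : ℝ) : ℂ)) := by
        rw [setIntegral_indicator hcell, cubeN_eq_pi, ← Set.pi_inter_distrib, integral_const_mul]
        simp only [hexp]
    _ = _ := by
        rw [setIntegral_univ_pi_prod (fun _ => Set.Ico 0 (N : ℝ) ∩ unitCellMod N)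
          fun j t => Complex.exp (Complex.I * ((xiN N k j * t : ℝ) : ℂ))]
        refine congrArg _ (Finset.prod_congr rfl fun j _ => ?_)
        rw [integral_Ico_inter_unitCellMod hN (periodic_cexp_I_mul (xiN_mul_natCast hN.ne' k j))
          (by fun_prop), integral_cexp_I_mul_neg_half_half]

lemma xiN_natCast_mul {N : ℕ} (hN : N ≠ 0) (m : Fin 3 → ℤ) :
    xiN N (fun i => N * m i) = fun i => 2 * π * m i := by
  funext i
  simp only [xiN]
  push_cast
  field_simp

lemma xiN_add_natCast_mul {N : ℕ} (hN : N ≠ 0) (k m : Fin 3 → ℤ) :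
    xiN N (fun i => k i + N * m i) = fun i => xiN N k i + 2 * π * m i := by
  funext i
  simp only [xiN]
  push_cast
  field_simp

lemma fCoeffR_jelliumCell_eq_zero {N : ℕ} (hN : 0 < N) (e Z : ℝ) {k : Fin 3 → ℤ} {j : Fin 3}
    (hj : k j ≠ 0) (hdvd : (N : ℤ) ∣ k j) : fCoeffR N (jelliumCell N e Z) (xiN N k) = 0 := by
  obtain ⟨m, hm⟩ := hdvd
  have hm0 : (m : ℝ) ≠ 0 := by rintro h; simp_all
  have hxi : xiN N k j / 2 = m * π := by
    simp only [xiN, hm]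
    push_cast
    field_simp
  have hsinc : Real.sinc (xiN N k j / 2) = 0 := by
    rw [hxi, Real.sinc_of_ne_zero (mul_ne_zero hm0 Real.pi_ne_zero), Real.sin_int_mul_pi,
      zero_div]
  rw [fCoeffR_jelliumCell hN, Finset.prod_eq_zero (Finset.mem_univ j) (by simp [hsinc]), mul_zero]

lemma SigMat_apply_self_eq_zero {N : ℕ} {σ : V3 → ℝ} {θ : V3} {a : Fin 3}
    (h : ∀ m : Fin 3 → ℤ,
      θ a + 2 * π * m a = 0 ∨ fCoeffR N σ (fun i => θ i + 2 * π * m i) = 0) :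
    SigMat N σ θ a a = 0 := by
  refine (tsum_congr fun m => ?_).trans tsum_zero
  rcases h m with h | h <;> simp [h]

theorem stmt14_general (N : ℕ) (hN : 2 ≤ N) (e Z : ℝ) :
    (∀ k : Fin 3 → ℤ,
        fCoeffR N (jelliumCell N e Z) (xiN N k) =
          ((e * Z : ℝ) : ℂ) * ∏ j : Fin 3,
            (if k j = 0 then 1
              else (((2 * Real.sin (xiN N k j / 2) / xiN N k j : ℝ)) : ℂ))) ∧
      JelliumCond N (jelliumCell N e Z) ∧
      (∀ k : Fin 3 → ℤ, k 0 = 0 → ¬ inGamma1 N k →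
        SigMat N (jelliumCell N e Z) (xiN N k) 0 0 = 0 ∧
          ¬ (SigMat N (jelliumCell N e Z) (xiN N k)).PosDef) := by
  have hN0 : 0 < N := by omega
  have hNZ : (N : ℤ) ≠ 0 := by exact_mod_cast hN0.ne'
  refine ⟨fun k => ?_, fun k hk => ?_, fun k hk0 _ => ?_⟩
  · rw [fCoeffR_jelliumCell hN0]
    refine congrArg _ (Finset.prod_congr rfl fun j _ => ?_)
    split_ifs with hj
    · simp [xiN, hj]
    · have hxi : xiN N k j ≠ 0 := by simp [xiN, hj, Real.pi_ne_zero, hN0.ne']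
      rw [Real.sinc_of_ne_zero (div_ne_zero hxi two_ne_zero)]
      push_cast
      field_simp
  · obtain ⟨j, hj⟩ := Function.ne_iff.mp hk
    rw [← xiN_natCast_mul hN0.ne']
    exact fCoeffR_jelliumCell_eq_zero hN0 e Z (j := j) (mul_ne_zero hNZ hj) (dvd_mul_right _ _)
  · have h00 : SigMat N (jelliumCell N e Z) (xiN N k) 0 0 = 0 := by
      refine SigMat_apply_self_eq_zero fun m => ?_
      by_cases hm : m 0 = 0
      · left
        simp [xiN, hk0, hm]
      · right
        rw [← xiN_add_natCast_mul hN0.ne']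
        exact fCoeffR_jelliumCell_eq_zero hN0 e Z (j := 0) (by simp [hk0, hm, hN0.ne'])
          (by simp [hk0])
    exact ⟨h00, fun hpos => hpos.diag_pos.ne' h00⟩

/-- the basic Jellium example satisfies the Jellium condition but
violates the Wiener condition. -/
theorem stmt14 (N : ℕ) (hN : 2 ≤ N) (e Z : ℝ) (he : 0 < e) (hZ : 0 < Z) :
    (∀ k : Fin 3 → ℤ,
        fCoeffR N (jelliumCell N e Z) (xiN N k) =
          ((e * Z : ℝ) : ℂ) * ∏ j : Fin 3,
            (if k j = 0 then 1
              else (((2 * Real.sin (xiN N k j / 2) / xiN N k j : ℝ)) : ℂ))) ∧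
      JelliumCond N (jelliumCell N e Z) ∧
      (∀ k : Fin 3 → ℤ, k 0 = 0 → ¬ inGamma1 N k →
        SigMat N (jelliumCell N e Z) (xiN N k) 0 0 = 0 ∧
          ¬ (SigMat N (jelliumCell N e Z) (xiN N k)).PosDef) :=
  stmt14_general N hN e Z

end SPN
end
end

section
/- (Newton–Girard rigidity of vanishing power sums.) Let N ≥ 1 and let w : {0,…,N−1} → ℂ satisfy ∑_{j=0}^{N−1} w(j)^m = 0 for every integer m with 1 ≤ m ≤ N−1. Then there exists C ∈ ℂ such that the multiset {w(0),…,w(N−1)} equals the multiset {C·e^{2πik/N} : k = 0,…,N−1}. -/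
/-! Newton's identities turn the vanishing of the power sums `p₁, …, p_{N-1}` into the vanishing
of the elementary symmetric functions `e₁, …, e_{N-1}`, so `∏ⱼ (X - w j) = X ^ N - c`. The `w j`
are therefore the `N`-th roots of `c`, i.e. `C * ζ ^ k` for any one of them `C` and a primitive
`N`-th root of unity `ζ`. -/

noncomputable section

open Finset Polynomial

theorem esymm_map_univ_eq_zero_of_sum_pow_eq_zero {ι R : Type*} [Fintype ι] [CommRing R]
    [NoZeroDivisors R] [CharZero R] (f : ι → R) {n : ℕ}
    (h : ∀ m, 1 ≤ m → m ≤ n → ∑ i, f i ^ m = 0) {k : ℕ} (hk : 1 ≤ k) (hkn : k ≤ n) :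
    (univ.val.map f).esymm k = 0 := by
  have newton := congrArg (MvPolynomial.aeval f) (MvPolynomial.mul_esymm_eq_sum ι R k)
  simp only [map_mul, map_sum, map_natCast, map_pow, map_neg, map_one,
    MvPolynomial.aeval_esymm_eq_multiset_esymm, MvPolynomial.psum, MvPolynomial.aeval_X] at newton
  rw [sum_eq_zero, mul_zero] at newton
  · exact (mul_eq_zero.mp newton).resolve_left (Nat.cast_ne_zero.mpr (by omega))
  · intro a ha
    rw [mem_filter, HasAntidiagonal.mem_antidiagonal] at ha
    rw [h a.2 (by omega) (by omega), mul_zero]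

namespace Multiset

theorem map_range_eq_map_univ {α : Type*} (n : ℕ) (f : ℕ → α) :
    (range n).map f = univ.val.map fun k : Fin n => f k := by
  rw [Fin.univ_val_map, List.ofFn_eq_map, range, ← List.map_coe_finRange_eq_range, map_coe,
    List.map_map]
  rfl

variable {R : Type*} [CommRing R]

theorem prod_X_sub_C_eq_X_pow_sub_C [Nontrivial R] (s : Multiset R) (hs : 0 < card s)
    (h : ∀ k, 0 < k → k < card s → s.esymm k = 0) :
    (s.map fun a => X - C a).prod = X ^ card s - C ((-1) ^ (card s + 1) * s.esymm (card s)) := by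
  ext k
  rw [coeff_sub, coeff_X_pow, coeff_C]
  rcases lt_trichotomy k (card s) with hk | rfl | hk
  · rw [prod_X_sub_C_coeff s hk.le, if_neg hk.ne]
    rcases Nat.eq_zero_or_pos k with rfl | hk0
    · simp [pow_succ]
    · rw [if_neg hk0.ne', h _ (by omega) (by omega)]
      simp
  · rw [prod_X_sub_C_coeff s le_rfl, if_neg hs.ne']
    simp [esymm]
  · rw [coeff_eq_zero_of_natDegree_lt (by rwa [natDegree_multiset_prod_X_sub_C_eq_card]),
      if_neg hk.ne', if_neg (by omega), sub_zero]

variable [IsDomain R]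

theorem eq_nthRoots_of_esymm_eq_zero (s : Multiset R) (hs : 0 < card s)
    (h : ∀ k, 0 < k → k < card s → s.esymm k = 0) :
    s = nthRoots (card s) ((-1) ^ (card s + 1) * s.esymm (card s)) := by
  rw [nthRoots, ← s.prod_X_sub_C_eq_X_pow_sub_C hs h, roots_multiset_prod_X_sub_C]

theorem eq_map_range_pow_mul_of_esymm_eq_zero {s : Multiset R}
    (h : ∀ k, 0 < k → k < card s → s.esymm k = 0) {ζ : R} (hζ : IsPrimitiveRoot ζ (card s))
    {a : R} (ha : a ∈ s) :
    s = (range (card s)).map fun k => ζ ^ k * a := by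
  have hs : 0 < card s := card_pos_iff_exists_mem.mpr ⟨a, ha⟩
  have hroots := s.eq_nthRoots_of_esymm_eq_zero hs h
  rw [hroots, mem_nthRoots hs] at ha
  rw [← hζ.nthRoots_eq ha, ← hroots]

end Multiset

namespace SPN

theorem stmt15_general (N : ℕ) (w : Fin N → ℂ)
    (h : ∀ m : ℕ, 1 ≤ m → m ≤ N - 1 → (∑ j : Fin N, w j ^ m) = 0) :
    ∃ C : ℂ,
      Multiset.map w Finset.univ.val =
        Multiset.map
          (fun k : Fin N =>
            C * Complex.exp (2 * ((Real.pi : ℝ) : ℂ) * Complex.I * ((k : ℕ) : ℂ) / (N : ℂ)))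
          Finset.univ.val := by
  rcases N.eq_zero_or_pos with rfl | hN
  · exact ⟨0, rfl⟩
  set s := univ.val.map w
  have hcard : Multiset.card s = N := by simp [s]
  have hesymm : ∀ k, 0 < k → k < Multiset.card s → s.esymm k = 0 :=
    fun k hk hkN => esymm_map_univ_eq_zero_of_sum_pow_eq_zero w h hk (by omega)
  have hζ := Complex.isPrimitiveRoot_exp N hN.ne'
  rw [← hcard] at hζ
  have hmem : w ⟨0, hN⟩ ∈ s := Multiset.mem_map_of_mem w (mem_univ_val _)
  refine ⟨w ⟨0, hN⟩, ?_⟩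
  rw [Multiset.eq_map_range_pow_mul_of_esymm_eq_zero hesymm hζ hmem, hcard,
    Multiset.map_range_eq_map_univ]
  congr 1 with k
  rw [← Complex.exp_nat_mul, mul_comm]
  congr 2
  ring

/-- Newton–Girard rigidity of vanishing power sums. -/
theorem stmt15 (N : ℕ) (hN : 1 ≤ N) (w : Fin N → ℂ)
    (h : ∀ m : ℕ, 1 ≤ m → m ≤ N - 1 → (∑ j : Fin N, w j ^ m) = 0) :
    ∃ C : ℂ,
      Multiset.map w Finset.univ.val =
        Multiset.map
          (fun k : Fin N =>
            C * Complex.exp (2 * ((Real.pi : ℝ) : ℂ) * Complex.I * ((k : ℕ) : ℂ) / (N : ℂ)))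
          Finset.univ.val :=
  stmt15_general N w h

end SPN
end
end
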